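/- Let K = 2^m for a natural number m ≥ 1 and let a : [0, ∞) → ℝ^{K−1} be a solution of the logit-optimization dynamics da_i/dt = b_i(a)/D(a) with a_i(0) > 0 for all i. Then the metric M(a) = (1/2)·Σ_{i=1}^{K−1} (â_i − 1/(K−1))² is nonincreasing along the trajectory; equivalently, for every a with positive entries, Σ_i â_i b_i(a) − (Σ_i â_i²)·(Σ_j b_j(a)) ≤ 0, with equality if and only if â = (1/(K−1))·1_{K−1}. -/

import Mathlib

open Matrix Finset

noncomputable section

/-- The Sylvester Hadamard matrix `Φ_{2^m}`, defined recursively by `Φ₁ = (1)` and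
`Φ_{2^{m+1}} = [[Φ_{2^m}, Φ_{2^m}], [Φ_{2^m}, -Φ_{2^m}]]`. -/
def sylvester : (m : ℕ) → Matrix (Fin (2 ^ m)) (Fin (2 ^ m)) ℝ
  | 0 => Matrix.of fun _ _ => 1
  | m + 1 => Matrix.of fun i j =>
      (if 2 ^ m ≤ i.val ∧ 2 ^ m ≤ j.val then -1 else 1) *
        sylvester m ⟨i.val % 2 ^ m, Nat.mod_lt _ (Nat.two_pow_pos m)⟩
          ⟨j.val % 2 ^ m, Nat.mod_lt _ (Nat.two_pow_pos m)⟩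

/-- The core `X = Φ[2:K, 2:K]` obtained by deleting the first row and column of `Φ`. -/
def hadCore (m : ℕ) : Matrix (Fin (2 ^ m - 1)) (Fin (2 ^ m - 1)) ℝ :=
  Matrix.of fun i j =>
    sylvester m ⟨i.val + 1, by have h1 := Nat.two_pow_pos m; have h2 := i.isLt; omega⟩
      ⟨j.val + 1, by have h1 := Nat.two_pow_pos m; have h2 := j.isLt; omega⟩

/-- `Ψ = 1 1ᵀ − X`. -/
def PsiM (m : ℕ) : Matrix (Fin (2 ^ m - 1)) (Fin (2 ^ m - 1)) ℝ :=
  Matrix.of fun i j => 1 - hadCore m i j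

/-- `b_i(a) = Σ_j Ψ_{ij} exp(−(Ψa)_j)`. -/
def bVec (m : ℕ) (a : Fin (2 ^ m - 1) → ℝ) (i : Fin (2 ^ m - 1)) : ℝ :=
  ∑ j, PsiM m i j * Real.exp (-((PsiM m).mulVec a j))

/-- `D(a) = 1 + Σ_j exp(−(Ψa)_j)`. -/
def Dden (m : ℕ) (a : Fin (2 ^ m - 1) → ℝ) : ℝ :=
  1 + ∑ j, Real.exp (-((PsiM m).mulVec a j))

/-- The energy `E(a) = log(1 + Σ_j exp(−(Ψa)_j))`. -/
def energyE (m : ℕ) (a : Fin (2 ^ m - 1) → ℝ) : ℝ :=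
  Real.log (1 + ∑ j, Real.exp (-((PsiM m).mulVec a j)))

/-- `b̄(a) = Σ_j â_j b_j(a)` with `â = a / ‖a‖₁`. -/
def bbar (m : ℕ) (a : Fin (2 ^ m - 1) → ℝ) : ℝ :=
  ∑ j, (a j / ∑ k, a k) * bVec m a j

/-- `M(a) = (1/2) Σ_i (â_i − 1/(K−1))²`. -/
def Mmetric (m : ℕ) (a : Fin (2 ^ m - 1) → ℝ) : ℝ :=
  (1 / 2) * ∑ i, (a i / (∑ k, a k) - 1 / ((2 : ℝ) ^ m - 1)) ^ 2

/-!
Write `u = a / ‖a‖₁`, `w = Ψu` and `e = exp(-Ψa)`, so that `b = Ψe`. Being a Kronecker power of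
`Φ₂`, the Sylvester matrix `Φ` is symmetric with `Φ² = K·I`, and its first row and column are all
ones. Deleting them leaves a core `X` with row sums `-1` and `X² = K·I - J`; hence `Ψ = J - X` is
symmetric with row sums `K` and `Ψ² = K(I + J)`. These identities turn `N = K - 1` times the gap
`Σ uᵢbᵢ - ‖u‖² Σ bⱼ` into `(N⟨w, e⟩ - Σw·Σe) - (N‖w‖² - (Σw)²)·Σe`. As `e` decreases with `w`,
Chebyshev's sum inequality makes the first bracket nonpositive, and Cauchy–Schwarz makes the second
nonnegative, with equality only for constant `w`, i.e. for uniform `u`. Along the flow `a` is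
increasing, hence stays positive, and `dM/dt` is the gap divided by `D·‖a‖₁`.
-/

open scoped Kronecker

section NormSqRate

variable {ι : Type*} [Fintype ι] {Ψ : Matrix ι ι ℝ}

/-- `‖a‖₁ · d/dt (½‖a / ‖a‖₁‖²)` at `u = a / ‖a‖₁` when `a` moves with velocity `v`. -/
def normSqRate (u v : ι → ℝ) : ℝ :=
  ∑ i, u i * v i - (∑ i, u i ^ 2) * ∑ j, v j

lemma normSqRate_div_const (u v : ι → ℝ) (D : ℝ) :
    normSqRate u (fun i => v i / D) = normSqRate u v / D := by
  simp only [normSqRate, mul_div_assoc', ← sum_div, sub_div]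

lemma nonempty_of_sum_eq_one {u : ι → ℝ} (hu : ∑ i, u i = 1) : Nonempty ι := by
  by_contra h
  simp [not_nonempty_iff.1 h] at hu

lemma Matrix.IsSymm.dotProduct_mulVec_comm (hΨ : Ψ.IsSymm) (u v : ι → ℝ) :
    u ⬝ᵥ (Ψ *ᵥ v) = (Ψ *ᵥ u) ⬝ᵥ v := by
  rw [dotProduct_mulVec, ← vecMul_transpose Ψ, hΨ.eq]

lemma Matrix.IsSymm.sum_mulVec {K : ℝ} (hΨ : Ψ.IsSymm) (hrow : ∀ i, ∑ j, Ψ i j = K)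
    (v : ι → ℝ) : ∑ i, (Ψ *ᵥ v) i = K * ∑ i, v i := by
  simp only [mulVec, dotProduct]
  rw [sum_comm, mul_sum]
  refine sum_congr rfl fun j _ => ?_
  rw [← sum_mul, ← hrow j]
  simp only [hΨ.apply]

lemma mulVec_mulVec_self [DecidableEq ι] {K : ℝ} (hsq : Ψ * Ψ = K • (1 + of fun _ _ => 1))
    (u : ι → ℝ) : Ψ *ᵥ (Ψ *ᵥ u) = K • (u + fun _ => ∑ i, u i) := by
  rw [mulVec_mulVec, hsq, smul_mulVec, add_mulVec, one_mulVec]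
  congr 2
  ext
  simp [mulVec, dotProduct]

lemma Matrix.IsSymm.sum_mulVec_sq [DecidableEq ι] {K : ℝ} (hΨ : Ψ.IsSymm)
    (hsq : Ψ * Ψ = K • (1 + of fun _ _ => 1)) (u : ι → ℝ) :
    ∑ i, (Ψ *ᵥ u) i ^ 2 = K * (∑ i, u i ^ 2 + (∑ i, u i) ^ 2) := by
  calc ∑ i, (Ψ *ᵥ u) i ^ 2 = (Ψ *ᵥ u) ⬝ᵥ (Ψ *ᵥ u) := by simp only [dotProduct, sq]
    _ = u ⬝ᵥ (Ψ *ᵥ (Ψ *ᵥ u)) := (hΨ.dotProduct_mulVec_comm _ _).symm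
    _ = K * (∑ i, u i ^ 2 + (∑ i, u i) ^ 2) := by
      rw [mulVec_mulVec_self hsq, dotProduct_smul, dotProduct_add, smul_eq_mul]
      simp only [dotProduct, sq, ← sum_mul]

lemma sum_card_mul_sub_sum_sq (w : ι → ℝ) :
    ∑ j, (Fintype.card ι * w j - ∑ k, w k) ^ 2 =
      Fintype.card ι * (Fintype.card ι * ∑ j, w j ^ 2 - (∑ j, w j) ^ 2) := by
  simp only [sub_sq, sum_add_distrib, sum_sub_distrib, mul_pow, ← mul_sum, ← sum_mul, sum_const,
    card_univ, nsmul_eq_mul]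
  ring

lemma card_mul_sum_sq_eq_sq_sum_iff (w : ι → ℝ) :
    Fintype.card ι * ∑ j, w j ^ 2 = (∑ j, w j) ^ 2 ↔ ∀ j, Fintype.card ι * w j = ∑ k, w k := by
  constructor
  · intro h j
    have hsq : ∑ j, (Fintype.card ι * w j - ∑ k, w k) ^ 2 = 0 := by
      rw [sum_card_mul_sub_sum_sq, h, sub_self, mul_zero]
    have := (sum_eq_zero_iff_of_nonneg fun j _ => sq_nonneg _).1 hsq j (mem_univ j)
    exact sub_eq_zero.1 (pow_eq_zero_iff two_ne_zero |>.1 this)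
  · intro h
    calc (Fintype.card ι : ℝ) * ∑ j, w j ^ 2 = ∑ j, (Fintype.card ι * w j) * w j := by
          rw [mul_sum]
          exact sum_congr rfl fun j _ => by ring
      _ = (∑ j, w j) ^ 2 := by simp only [h, ← mul_sum, sq]

lemma card_mul_mulVec_eq_sum_iff [DecidableEq ι] (hΨ : Ψ.IsSymm)
    (hrow : ∀ i, ∑ j, Ψ i j = Fintype.card ι + 1)
    (hsq : Ψ * Ψ = (Fintype.card ι + 1 : ℝ) • (1 + of fun _ _ => 1))
    {u : ι → ℝ} (hu : ∑ i, u i = 1) :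
    (∀ j, Fintype.card ι * (Ψ *ᵥ u) j = ∑ k, (Ψ *ᵥ u) k) ↔ ∀ i, u i = 1 / Fintype.card ι := by
  set N : ℝ := (Fintype.card ι : ℝ)
  have := nonempty_of_sum_eq_one hu
  have hN : 0 < N := by positivity
  have hsum : ∑ k, (Ψ *ᵥ u) k = N + 1 := by rw [hΨ.sum_mulVec hrow, hu, mul_one]
  have hmul (v : ι → ℝ) (i : ι) : N * (Ψ *ᵥ v) i = ∑ j, Ψ i j * (N * v j) := by
    simp only [mulVec, dotProduct, mul_sum, mul_left_comm N]
  rw [hsum]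
  constructor
  · intro h i
    have h2 : (Ψ *ᵥ (Ψ *ᵥ u)) i = (N + 1) * (u i + 1) := by
      simp [mulVec_mulVec_self hsq, hu]
    have h3 : N * (Ψ *ᵥ (Ψ *ᵥ u)) i = (N + 1) * (N + 1) := by
      rw [hmul]
      simp only [h, ← sum_mul, hrow]
    rw [h2, mul_left_comm, mul_right_inj' (by positivity)] at h3
    rw [eq_div_iff hN.ne']
    linarith
  · intro h j
    simp only [hmul, h, mul_one_div_cancel hN.ne', mul_one, hrow]

lemma card_mul_normSqRate_eq [DecidableEq ι] (hΨ : Ψ.IsSymm)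
    (hrow : ∀ i, ∑ j, Ψ i j = Fintype.card ι + 1)
    (hsq : Ψ * Ψ = (Fintype.card ι + 1 : ℝ) • (1 + of fun _ _ => 1))
    {u : ι → ℝ} (hu : ∑ i, u i = 1) (e : ι → ℝ) :
    Fintype.card ι * normSqRate u (Ψ *ᵥ e) =
      (Fintype.card ι * ∑ j, (Ψ *ᵥ u) j * e j - (∑ j, (Ψ *ᵥ u) j) * ∑ j, e j) -
        (Fintype.card ι * ∑ j, (Ψ *ᵥ u) j ^ 2 - (∑ j, (Ψ *ᵥ u) j) ^ 2) * ∑ j, e j := by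
  have h := hΨ.dotProduct_mulVec_comm u e
  simp only [dotProduct] at h
  rw [normSqRate, h, hΨ.sum_mulVec hrow, hΨ.sum_mulVec hrow, hΨ.sum_mulVec_sq hsq, hu]
  ring

theorem normSqRate_mulVec_nonpos [DecidableEq ι] (hΨ : Ψ.IsSymm)
    (hrow : ∀ i, ∑ j, Ψ i j = Fintype.card ι + 1)
    (hsq : Ψ * Ψ = (Fintype.card ι + 1 : ℝ) • (1 + of fun _ _ => 1))
    {u e : ι → ℝ} (hu : ∑ i, u i = 1) (he : ∀ j, 0 ≤ e j) (hanti : Antivary e (Ψ *ᵥ u)) :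
    normSqRate u (Ψ *ᵥ e) ≤ 0 := by
  have := nonempty_of_sum_eq_one hu
  have hchebyshev := hanti.symm.card_mul_sum_le_sum_mul_sum
  have hcs : (∑ j, (Ψ *ᵥ u) j) ^ 2 ≤ Fintype.card ι * ∑ j, (Ψ *ᵥ u) j ^ 2 :=
    sq_sum_le_card_mul_sum_sq
  have hE : 0 ≤ ∑ j, e j := sum_nonneg fun j _ => he j
  refine nonpos_of_mul_nonpos_right ?_ (by positivity : (0 : ℝ) < Fintype.card ι)
  rw [card_mul_normSqRate_eq hΨ hrow hsq hu e]
  nlinarith [mul_nonneg (sub_nonneg.2 hcs) hE]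

theorem normSqRate_mulVec_eq_zero_iff [DecidableEq ι] (hΨ : Ψ.IsSymm)
    (hrow : ∀ i, ∑ j, Ψ i j = Fintype.card ι + 1)
    (hsq : Ψ * Ψ = (Fintype.card ι + 1 : ℝ) • (1 + of fun _ _ => 1))
    {u e : ι → ℝ} (hu : ∑ i, u i = 1) (he : ∀ j, 0 < e j) (hanti : Antivary e (Ψ *ᵥ u)) :
    normSqRate u (Ψ *ᵥ e) = 0 ↔ ∀ i, u i = 1 / Fintype.card ι := by
  rw [← card_mul_mulVec_eq_sum_iff hΨ hrow hsq hu, ← card_mul_sum_sq_eq_sq_sum_iff]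
  have := nonempty_of_sum_eq_one hu
  have hN : (0 : ℝ) < Fintype.card ι := by positivity
  have hE : 0 < ∑ j, e j := sum_pos (fun j _ => he j) univ_nonempty
  have key := card_mul_normSqRate_eq hΨ hrow hsq hu e
  set w := Ψ *ᵥ u
  constructor
  · intro h
    have hchebyshev := hanti.symm.card_mul_sum_le_sum_mul_sum
    have hcs : (∑ j, w j) ^ 2 ≤ Fintype.card ι * ∑ j, w j ^ 2 := sq_sum_le_card_mul_sum_sq
    rw [h, mul_zero] at key
    have : (Fintype.card ι * ∑ j, w j ^ 2 - (∑ j, w j) ^ 2) * ∑ j, e j ≤ 0 := by linarith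
    have := nonpos_of_mul_nonpos_left this hE
    linarith
  · intro h
    have hconst := (card_mul_sum_sq_eq_sq_sum_iff w).1 h
    have hchebyshev : Fintype.card ι * ∑ j, w j * e j = (∑ j, w j) * ∑ j, e j := by
      simp only [mul_sum, ← mul_assoc, hconst]
    rw [hchebyshev, h, sub_self, sub_self, zero_mul, sub_zero] at key
    exact (mul_eq_zero.1 key).resolve_left hN.ne'

end NormSqRate

section NormalizedHadamard

variable {n : ℕ} {H : Matrix (Fin (n + 1)) (Fin (n + 1)) ℝ}

/-- For `H = [[1, 1ᵀ], [1, X]]` this is `J - X`, the paper's `Ψ`. -/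
def coreComplement (H : Matrix (Fin (n + 1)) (Fin (n + 1)) ℝ) : Matrix (Fin n) (Fin n) ℝ :=
  of fun i j => 1 - H i.succ j.succ

lemma sum_core_row (hsq : H * H = ((n : ℝ) + 1) • 1) (hcol : ∀ i, H i 0 = 1) (i : Fin n) :
    ∑ j : Fin n, H i.succ j.succ = -1 := by
  have h := congr_fun₂ hsq i.succ 0
  rw [mul_apply, Fin.sum_univ_succ] at h
  simp only [hcol, mul_one, Matrix.smul_apply, one_apply, Fin.succ_ne_zero, if_false,
    smul_zero] at h
  linarith

lemma sum_core_col (hsq : H * H = ((n : ℝ) + 1) • 1) (hrow : ∀ j, H 0 j = 1) (j : Fin n) :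
    ∑ i : Fin n, H i.succ j.succ = -1 := by
  have h := congr_fun₂ hsq 0 j.succ
  rw [mul_apply, Fin.sum_univ_succ] at h
  simp only [hrow, one_mul, Matrix.smul_apply, one_apply, (Fin.succ_ne_zero j).symm, if_false,
    smul_zero] at h
  linarith

lemma sum_core_mul_core (hsq : H * H = ((n : ℝ) + 1) • 1) (hrow : ∀ j, H 0 j = 1)
    (hcol : ∀ i, H i 0 = 1) (i j : Fin n) :
    ∑ k : Fin n, H i.succ k.succ * H k.succ j.succ =
      ((n : ℝ) + 1) * (1 : Matrix (Fin n) (Fin n) ℝ) i j - 1 := by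
  have h := congr_fun₂ hsq i.succ j.succ
  rw [mul_apply, Fin.sum_univ_succ] at h
  simp only [hrow, hcol, mul_one, Matrix.smul_apply, one_apply, Fin.succ_inj, smul_eq_mul] at h ⊢
  linarith

lemma isSymm_coreComplement (hH : H.IsSymm) : (coreComplement H).IsSymm :=
  IsSymm.ext fun i j => by simp only [coreComplement, of_apply, hH.apply]

lemma sum_coreComplement_row (hsq : H * H = ((n : ℝ) + 1) • 1) (hcol : ∀ i, H i 0 = 1)
    (i : Fin n) : ∑ j, coreComplement H i j = n + 1 := by
  simp [coreComplement, sum_sub_distrib, sum_core_row hsq hcol]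

lemma coreComplement_mul_self (hsq : H * H = ((n : ℝ) + 1) • 1) (hrow : ∀ j, H 0 j = 1)
    (hcol : ∀ i, H i 0 = 1) :
    coreComplement H * coreComplement H = ((n : ℝ) + 1) • (1 + of fun _ _ => 1) := by
  ext i j
  simp only [coreComplement, mul_apply, of_apply, sub_mul, mul_sub, one_mul, mul_one,
    sum_sub_distrib, sum_core_row hsq hcol, sum_core_col hsq hrow, sum_core_mul_core hsq hrow hcol,
    Matrix.smul_apply, Matrix.add_apply, smul_eq_mul, sum_const, card_univ, Fintype.card_fin,
    nsmul_eq_mul]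
  ring

end NormalizedHadamard

section Sylvester

def hadamard2 : Matrix (Fin 2) (Fin 2) ℝ := !![1, 1; 1, -1]

def sylvesterSplit (m : ℕ) : Fin 2 × Fin (2 ^ m) ≃ Fin (2 ^ (m + 1)) :=
  finProdFinEquiv.trans (finCongr (pow_succ' 2 m).symm)

lemma sylvester_succ (m : ℕ) :
    sylvester (m + 1) =
      (hadamard2 ⊗ₖ sylvester m).reindex (sylvesterSplit m) (sylvesterSplit m) := by
  ext i j
  obtain ⟨⟨b, r⟩, rfl⟩ := (sylvesterSplit m).surjective i
  obtain ⟨⟨b', r'⟩, rfl⟩ := (sylvesterSplit m).surjective j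
  have hmod (r : Fin (2 ^ m)) :
      (⟨r % 2 ^ m, Nat.mod_lt _ (Nat.two_pow_pos m)⟩ : Fin (2 ^ m)) = r :=
    Fin.ext (Nat.mod_eq_of_lt r.isLt)
  simp only [reindex_apply, submatrix_apply, sylvester, sylvesterSplit, Equiv.trans_apply,
    finProdFinEquiv_apply_val, finCongr_apply, Fin.val_cast, of_apply]
  fin_cases b <;> fin_cases b' <;> simp [hadamard2, hmod, r.isLt, r'.isLt]

lemma transpose_hadamard2 : hadamard2ᵀ = hadamard2 := by
  ext i j
  fin_cases i <;> fin_cases j <;> rfl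

lemma hadamard2_mul_self : hadamard2 * hadamard2 = (2 : ℝ) • 1 := by
  ext i j
  fin_cases i <;> fin_cases j <;> norm_num [hadamard2]

lemma isSymm_sylvester (m : ℕ) : (sylvester m).IsSymm := by
  unfold IsSymm
  induction m with
  | zero => rfl
  | succ m ih =>
    rw [sylvester_succ, transpose_reindex, ← kroneckerMap_transpose, transpose_hadamard2, ih]

lemma sylvester_mul_self (m : ℕ) : sylvester m * sylvester m = (2 : ℝ) ^ m • 1 := by
  induction m with
  | zero =>
    ext i j
    simp [sylvester, mul_apply, Fin.fin_one_eq_zero]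
  | succ m ih =>
    rw [sylvester_succ, ← coe_reindexLinearEquiv ℝ, reindexLinearEquiv_mul, ← mul_kronecker_mul,
      hadamard2_mul_self, ih, smul_kronecker, kronecker_smul, one_kronecker_one]
    simp [smul_smul, pow_succ']

lemma abs_sylvester_apply (m : ℕ) (i j : Fin (2 ^ m)) : |sylvester m i j| = 1 := by
  induction m with
  | zero => simp [sylvester]
  | succ m ih =>
    rw [sylvester, of_apply, abs_mul, ih]
    split_ifs <;> simp

lemma sylvester_zero_apply (m : ℕ) (j : Fin (2 ^ m)) : sylvester m 0 j = 1 := by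
  induction m with
  | zero => rfl
  | succ m ih =>
    have h0 : ((0 : Fin (2 ^ (m + 1))) : ℕ) % 2 ^ m = (0 : Fin (2 ^ m)) := by simp
    simp only [sylvester, of_apply, h0, ih]
    simp

lemma natCast_two_pow_sub_one_add_one (m : ℕ) : ((2 ^ m - 1 : ℕ) : ℝ) + 1 = 2 ^ m := by
  rw [Nat.cast_sub Nat.one_le_two_pow]
  push_cast
  ring

/-- `Φ_{2^m}` indexed by `Fin (2 ^ m - 1 + 1)`, so that `Fin.succ` enumerates its core. -/
def sylvesterFinSucc (m : ℕ) : Matrix (Fin (2 ^ m - 1 + 1)) (Fin (2 ^ m - 1 + 1)) ℝ :=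
  (sylvester m).reindex (finCongr (Nat.sub_add_cancel Nat.one_le_two_pow).symm)
    (finCongr (Nat.sub_add_cancel Nat.one_le_two_pow).symm)

lemma PsiM_eq_coreComplement (m : ℕ) : PsiM m = coreComplement (sylvesterFinSucc m) := rfl

lemma isSymm_sylvesterFinSucc (m : ℕ) : (sylvesterFinSucc m).IsSymm :=
  (isSymm_sylvester m).reindex _

lemma sylvesterFinSucc_mul_self (m : ℕ) :
    sylvesterFinSucc m * sylvesterFinSucc m = (((2 ^ m - 1 : ℕ) : ℝ) + 1) • 1 := by
  rw [sylvesterFinSucc, reindex_apply, submatrix_mul_equiv, sylvester_mul_self,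
    natCast_two_pow_sub_one_add_one]
  ext i j
  simp [one_apply]

lemma sylvesterFinSucc_zero_apply (m : ℕ) (j : Fin (2 ^ m - 1 + 1)) :
    sylvesterFinSucc m 0 j = 1 := by
  simp [sylvesterFinSucc, sylvester_zero_apply]

lemma sylvesterFinSucc_apply_zero (m : ℕ) (i : Fin (2 ^ m - 1 + 1)) :
    sylvesterFinSucc m i 0 = 1 :=
  ((isSymm_sylvesterFinSucc m).apply 0 i).trans (sylvesterFinSucc_zero_apply m i)

end Sylvester

section Psi

lemma isSymm_PsiM (m : ℕ) : (PsiM m).IsSymm :=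
  isSymm_coreComplement (isSymm_sylvesterFinSucc m)

lemma sum_PsiM_row (m : ℕ) (i : Fin (2 ^ m - 1)) : ∑ j, PsiM m i j = 2 ^ m := by
  rw [PsiM_eq_coreComplement, sum_coreComplement_row (sylvesterFinSucc_mul_self m)
    (sylvesterFinSucc_apply_zero m), natCast_two_pow_sub_one_add_one]

lemma PsiM_mul_self (m : ℕ) : PsiM m * PsiM m = (2 : ℝ) ^ m • (1 + of fun _ _ => 1) := by
  rw [PsiM_eq_coreComplement, coreComplement_mul_self (sylvesterFinSucc_mul_self m)
    (sylvesterFinSucc_zero_apply m) (sylvesterFinSucc_apply_zero m),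
    natCast_two_pow_sub_one_add_one]

lemma PsiM_nonneg (m : ℕ) (i j : Fin (2 ^ m - 1)) : 0 ≤ PsiM m i j :=
  sub_nonneg.2 ((le_abs_self _).trans (abs_sylvester_apply m _ _).le)

lemma nonempty_fin_two_pow_sub_one {m : ℕ} (hm : 1 ≤ m) : Nonempty (Fin (2 ^ m - 1)) :=
  ⟨⟨0, by have := Nat.pow_le_pow_right two_pos hm; omega⟩⟩

theorem normSqRate_bVec_nonpos_and_eq_zero_iff (m : ℕ) (hm : 1 ≤ m) (c : Fin (2 ^ m - 1) → ℝ)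
    (hc : ∀ i, 0 < c i) :
    normSqRate (fun i => c i / ∑ k, c k) (bVec m c) ≤ 0 ∧
      (normSqRate (fun i => c i / ∑ k, c k) (bVec m c) = 0 ↔
        ∀ i, c i / (∑ k, c k) = 1 / ((2 : ℝ) ^ m - 1)) := by
  have := nonempty_fin_two_pow_sub_one hm
  have hS : 0 < ∑ k, c k := sum_pos (fun i _ => hc i) univ_nonempty
  have hu : ∑ i, c i / ∑ k, c k = 1 := by rw [← sum_div, div_self hS.ne']
  have hmv : PsiM m *ᵥ c = (∑ k, c k) • (PsiM m *ᵥ fun i => c i / ∑ k, c k) := by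
    rw [← mulVec_smul]
    congr 1
    ext i
    rw [Pi.smul_apply, smul_eq_mul, mul_div_cancel₀ _ hS.ne']
  have hanti : Antivary (fun j => Real.exp (-(PsiM m *ᵥ c) j))
      (PsiM m *ᵥ fun i => c i / ∑ k, c k) := fun i j hij => by
    simp only [hmv, Pi.smul_apply, smul_eq_mul]
    exact Real.exp_le_exp.2 (neg_le_neg (mul_le_mul_of_nonneg_left hij.le hS.le))
  have hK : (Fintype.card (Fin (2 ^ m - 1)) : ℝ) + 1 = 2 ^ m := by
    rw [Fintype.card_fin, natCast_two_pow_sub_one_add_one]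
  have hrow (i : Fin (2 ^ m - 1)) : ∑ j, PsiM m i j = Fintype.card (Fin (2 ^ m - 1)) + 1 := by
    rw [hK, sum_PsiM_row]
  have hsq : PsiM m * PsiM m =
      (Fintype.card (Fin (2 ^ m - 1)) + 1 : ℝ) • (1 + of fun _ _ => 1) := by
    rw [hK, PsiM_mul_self]
  have hzero :=
    normSqRate_mulVec_eq_zero_iff (isSymm_PsiM m) hrow hsq hu (fun j => Real.exp_pos _) hanti
  rw [show (Fintype.card (Fin (2 ^ m - 1)) : ℝ) = 2 ^ m - 1 by linarith] at hzero
  exact ⟨normSqRate_mulVec_nonpos (isSymm_PsiM m) hrow hsq hu (fun j => (Real.exp_pos _).le) hanti,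
    hzero⟩

end Psi

lemma hasDerivAt_half_sum_sq_div_sum {ι : Type*} [Fintype ι] {a : ℝ → ι → ℝ} {a' : ι → ℝ}
    {t : ℝ} (κ : ℝ) (ha : ∀ i, HasDerivAt (fun s => a s i) (a' i) t) (hS : ∑ k, a t k ≠ 0) :
    HasDerivAt (fun s => (1 / 2) * ∑ i, (a s i / ∑ k, a s k - κ) ^ 2)
      (normSqRate (fun i => a t i / ∑ k, a t k) a' / ∑ k, a t k) t := by
  have hsum : HasDerivAt (fun s => ∑ k, a s k) (∑ k, a' k) t := HasDerivAt.fun_sum fun k _ => ha k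
  refine ((HasDerivAt.fun_sum fun i _ =>
    (((ha i).div hsum hS).sub_const κ).pow 2).const_mul (1 / 2)).congr_deriv ?_
  simp only [Pi.div_apply, Nat.cast_ofNat, Nat.add_one_sub_one, pow_one]
  set S := ∑ k, a t k
  set S' := ∑ k, a' k
  have hnorm : ∑ i, a t i / S = 1 := by rw [← sum_div, div_self hS]
  calc _ = (∑ i, (a t i / S * a' i - (a t i / S) ^ 2 * S' - κ * a' i + κ * S' * (a t i / S))) /
        S := by
        rw [sum_div, mul_sum]
        refine sum_congr rfl fun i _ => ?_
        field_simp
        ring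
    _ = _ := by
        simp only [normSqRate, sum_add_distrib, sum_sub_distrib, ← mul_sum, ← sum_mul, hnorm]
        ring

lemma monotoneOn_Ici_of_hasDerivAt_nonneg {f f' : ℝ → ℝ} {x₀ : ℝ}
    (hf : ∀ t ≥ x₀, HasDerivAt f (f' t) t) (hf' : ∀ t ≥ x₀, 0 ≤ f' t) :
    MonotoneOn f (Set.Ici x₀) :=
  monotoneOn_of_hasDerivWithinAt_nonneg (convex_Ici x₀)
    (fun t ht => (hf t ht).continuousAt.continuousWithinAt)
    (fun t ht => (hf t (interior_subset ht)).hasDerivWithinAt)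
    (fun t ht => hf' t (interior_subset ht))

lemma antitoneOn_Ici_of_hasDerivAt_nonpos {f f' : ℝ → ℝ} {x₀ : ℝ}
    (hf : ∀ t ≥ x₀, HasDerivAt f (f' t) t) (hf' : ∀ t ≥ x₀, f' t ≤ 0) :
    AntitoneOn f (Set.Ici x₀) :=
  antitoneOn_of_hasDerivWithinAt_nonpos (convex_Ici x₀)
    (fun t ht => (hf t ht).continuousAt.continuousWithinAt)
    (fun t ht => (hf t (interior_subset ht)).hasDerivWithinAt)
    (fun t ht => hf' t (interior_subset ht))

/-- monotonic convergence under direct logit optimization.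
If `a : [0,∞) → ℝ^{K−1}` solves the logit-optimization dynamics `da_i/dt = b_i(a)/D(a)`
with positive initialization, then `M(a(t))` is nonincreasing; equivalently, for every `a`
with positive entries, `Σ_i â_i b_i(a) − (Σ_i â_i²)(Σ_j b_j(a)) ≤ 0`, with equality iff
`â = (1/(K−1))·1`. -/
theorem logit_optimization_metric_monotone (m : ℕ) (hm : 1 ≤ m)
    (a : ℝ → Fin (2 ^ m - 1) → ℝ)
    (hflow : ∀ t ≥ (0 : ℝ), ∀ i, HasDerivAt (fun s => a s i)
        (bVec m (a t) i / Dden m (a t)) t)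
    (hpos : ∀ i, 0 < a 0 i) :
    AntitoneOn (fun t => Mmetric m (a t)) (Set.Ici (0 : ℝ)) ∧
    (∀ c : Fin (2 ^ m - 1) → ℝ, (∀ i, 0 < c i) →
      ((∑ i, (c i / ∑ k, c k) * bVec m c i) -
        (∑ i, (c i / ∑ k, c k) ^ 2) * (∑ j, bVec m c j) ≤ 0 ∧
       ((∑ i, (c i / ∑ k, c k) * bVec m c i) -
        (∑ i, (c i / ∑ k, c k) ^ 2) * (∑ j, bVec m c j) = 0 ↔
        ∀ i, c i / (∑ k, c k) = 1 / ((2 : ℝ) ^ m - 1)))) := by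
  refine ⟨?_, normSqRate_bVec_nonpos_and_eq_zero_iff m hm⟩
  have := nonempty_fin_two_pow_sub_one hm
  have hD (c : Fin (2 ^ m - 1) → ℝ) : 0 < Dden m c := by
    unfold Dden
    positivity
  have hvel (t : ℝ) (i) : 0 ≤ bVec m (a t) i / Dden m (a t) :=
    div_nonneg (sum_nonneg fun j _ => mul_nonneg (PsiM_nonneg m i j) (Real.exp_pos _).le) (hD _).le
  have hapos (t : ℝ) (ht : t ≥ 0) (i) : 0 < a t i :=
    (hpos i).trans_le (monotoneOn_Ici_of_hasDerivAt_nonneg (fun s hs => hflow s hs i)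
      (fun s _ => hvel s i) Set.self_mem_Ici ht ht)
  have hS (t : ℝ) (ht : t ≥ 0) : 0 < ∑ k, a t k := sum_pos (fun i _ => hapos t ht i) univ_nonempty
  refine antitoneOn_Ici_of_hasDerivAt_nonpos
    (fun t ht => hasDerivAt_half_sum_sq_div_sum _ (hflow t ht) (hS t ht).ne') fun t ht => ?_
  rw [normSqRate_div_const]
  exact div_nonpos_of_nonpos_of_nonneg (div_nonpos_of_nonpos_of_nonneg
    (normSqRate_bVec_nonpos_and_eq_zero_iff m hm (a t) (hapos t ht)).1 (hD _).le) (hS t ht).le
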